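/- arXiv:1902.04972 — 3 statements merged into one kernel-verified Lean document; each statement's English description precedes it below -/
import Mathlib

section
/- Davis–Kahan sin-theta consequence: let D and D̂ be symmetric n×n matrices, U* the n×r matrix of eigenvectors of D corresponding to its r largest eigenvalues and U that of D̂. If λ_r(D) − λ_{r+1}(D) − ‖D − D̂‖ > 0, then SE(U, U*) := ‖(I − U U')U*‖ ≤ ‖D − D̂‖ / (λ_r(D) − λ_{r+1}(D) − ‖D − D̂‖). -/
open Matrix RealInnerProductSpace

/-- Spectral norm (largest singular value) of a real matrix. -/
noncomputable def specNorm {m n : ℕ} (A : Matrix (Fin m) (Fin n) ℝ) : ℝ :=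
  ‖LinearMap.toContinuousLinearMap (Matrix.toEuclideanLin A)‖

/-- The `k`-th largest eigenvalue of a (symmetric) real matrix, via the
Courant–Fischer max-min characterization. -/
noncomputable def eigVal {n : ℕ} (k : ℕ) (D : Matrix (Fin n) (Fin n) ℝ) : ℝ :=
  sSup {s | ∃ V : Submodule ℝ (EuclideanSpace ℝ (Fin n)), Module.finrank ℝ V = k ∧
    s = sInf ((fun v => ⟪v, Matrix.toEuclideanLin D v⟫) ''
      {v : EuclideanSpace ℝ (Fin n) | v ∈ V ∧ ‖v‖ = 1})}

noncomputable def clm {m k : ℕ} (A : Matrix (Fin m) (Fin k) ℝ) :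
    EuclideanSpace ℝ (Fin k) →L[ℝ] EuclideanSpace ℝ (Fin m) :=
  LinearMap.toContinuousLinearMap (Matrix.toEuclideanLin A)

variable {m k l n r : ℕ}

lemma clm_apply (A : Matrix (Fin m) (Fin k) ℝ) (x : EuclideanSpace ℝ (Fin k)) (i : Fin m) :
    clm A x i = ∑ j, A i j * x j := by
  simp [clm, Matrix.toEuclideanLin_apply, WithLp.equiv]
  rfl

lemma clm_mul (A : Matrix (Fin m) (Fin k) ℝ) (B : Matrix (Fin k) (Fin l) ℝ) :
    clm (A * B) = (clm A).comp (clm B) := by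
  ext x i
  simp [clm, Matrix.toEuclideanLin_apply, Matrix.mulVec_mulVec]

lemma clm_one : clm (1 : Matrix (Fin m) (Fin m) ℝ) = ContinuousLinearMap.id ℝ _ := by
  ext x i
  simp [clm, Matrix.toEuclideanLin_apply]

lemma inner_clm_left (A : Matrix (Fin m) (Fin k) ℝ) (x : EuclideanSpace ℝ (Fin m))
    (y : EuclideanSpace ℝ (Fin k)) : ⟪x, clm A y⟫ = ⟪clm Aᵀ x, y⟫ := by
  simp only [PiLp.inner_apply, RCLike.inner_apply, conj_trivial, clm_apply, Matrix.transpose_apply]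
  simp only [Finset.mul_sum, Finset.sum_mul]
  rw [Finset.sum_comm]
  apply Finset.sum_congr rfl; intro i _; apply Finset.sum_congr rfl; intro j _; ring

lemma inner_clm_clm (A : Matrix (Fin m) (Fin k) ℝ) (B : Matrix (Fin m) (Fin l) ℝ)
    (x : EuclideanSpace ℝ (Fin k)) (y : EuclideanSpace ℝ (Fin l)) :
    ⟪clm A x, clm B y⟫ = ⟪x, clm (Aᵀ * B) y⟫ := by
  rw [clm_mul, ContinuousLinearMap.comp_apply, inner_clm_left Aᵀ, Matrix.transpose_transpose]

lemma norm_clm_orth (A : Matrix (Fin m) (Fin k) ℝ) (hA : Aᵀ * A = 1)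
    (x : EuclideanSpace ℝ (Fin k)) : ‖clm A x‖ = ‖x‖ := by
  have h := inner_clm_clm A A x x
  rw [hA, clm_one] at h
  simp only [ContinuousLinearMap.coe_id', id_eq] at h
  rw [real_inner_self_eq_norm_sq, real_inner_self_eq_norm_sq] at h
  nlinarith [norm_nonneg (clm A x), norm_nonneg x]

lemma inner_clm_diag (Λ : Matrix (Fin r) (Fin r) ℝ) (hdiag : ∀ i j, i ≠ j → Λ i j = 0)
    {a : ℝ} (ha : ∀ i, a ≤ Λ i i) (z : EuclideanSpace ℝ (Fin r)) :
    a * ‖z‖ ^ 2 ≤ ⟪z, clm Λ z⟫ := by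
  have hz : (‖z‖:ℝ) ^ 2 = ∑ i, z i ^ 2 := by
    rw [← real_inner_self_eq_norm_sq, PiLp.inner_apply]
    simp [sq]
  have : ⟪z, clm Λ z⟫ = ∑ i, Λ i i * z i ^ 2 := by
    simp only [PiLp.inner_apply, RCLike.inner_apply, conj_trivial, clm_apply]
    apply Finset.sum_congr rfl; intro i _
    rw [Finset.sum_eq_single i]
    · ring
    · intro j _ hj; rw [hdiag i j (Ne.symm hj)]; ring
    · intro h; simp at h
  rw [this, hz, Finset.mul_sum]
  apply Finset.sum_le_sum
  intro i _
  exact mul_le_mul_of_nonneg_right (ha i) (sq_nonneg _)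

def raySet (A : Matrix (Fin n) (Fin n) ℝ) (V : Submodule ℝ (EuclideanSpace ℝ (Fin n))) : Set ℝ :=
  (fun v => ⟪v, Matrix.toEuclideanLin A v⟫) '' {v : EuclideanSpace ℝ (Fin n) | v ∈ V ∧ ‖v‖ = 1}

def eset (k : ℕ) (A : Matrix (Fin n) (Fin n) ℝ) : Set ℝ :=
  {s | ∃ V : Submodule ℝ (EuclideanSpace ℝ (Fin n)), Module.finrank ℝ V = k ∧ s = sInf (raySet A V)}

lemma eigVal_eq (k : ℕ) (A : Matrix (Fin n) (Fin n) ℝ) : eigVal k A = sSup (eset k A) := rfl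

lemma ray_clm (A : Matrix (Fin n) (Fin n) ℝ) (v : EuclideanSpace ℝ (Fin n)) :
    ⟪v, Matrix.toEuclideanLin A v⟫ = ⟪v, clm A v⟫ := rfl

lemma specNorm_eq (A : Matrix (Fin m) (Fin k) ℝ) : specNorm A = ‖clm A‖ := rfl

lemma clm_sub (A B : Matrix (Fin m) (Fin k) ℝ) : clm (A - B) = clm A - clm B := by
  ext x i; simp [clm]

lemma clm_add (A B : Matrix (Fin m) (Fin k) ℝ) : clm (A + B) = clm A + clm B := by
  ext x i; simp [clm]

lemma clm_zero : clm (0 : Matrix (Fin m) (Fin k) ℝ) = 0 := by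
  ext x i; simp [clm]

lemma specNorm_sub_comm (A B : Matrix (Fin m) (Fin k) ℝ) :
    specNorm (A - B) = specNorm (B - A) := by
  rw [specNorm_eq, specNorm_eq, ← norm_neg, show -(clm (A-B)) = clm (B-A) by
    rw [clm_sub, clm_sub]; abel]

lemma ray_abs_le (A : Matrix (Fin n) (Fin n) ℝ) {v : EuclideanSpace ℝ (Fin n)} (hv : ‖v‖ = 1) :
    |⟪v, clm A v⟫| ≤ specNorm A := by
  calc |⟪v, clm A v⟫| ≤ ‖v‖ * ‖clm A v‖ := abs_real_inner_le_norm _ _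
  _ ≤ ‖v‖ * (‖clm A‖ * ‖v‖) := by
      gcongr; exact (clm A).le_opNorm v
  _ = specNorm A := by rw [hv, specNorm_eq]; ring

lemma raySet_bddBelow (A : Matrix (Fin n) (Fin n) ℝ) (V : Submodule ℝ (EuclideanSpace ℝ (Fin n))) :
    BddBelow (raySet A V) := by
  refine ⟨-specNorm A, ?_⟩
  rintro b ⟨v, ⟨hvV, hv1⟩, rfl⟩
  have := ray_abs_le A hv1
  rw [← ray_clm] at this
  linarith [neg_abs_le (⟪v, Matrix.toEuclideanLin A v⟫ : ℝ)]

lemma csInf_le_ray (A : Matrix (Fin n) (Fin n) ℝ) {V : Submodule ℝ (EuclideanSpace ℝ (Fin n))}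
    {v : EuclideanSpace ℝ (Fin n)} (hvV : v ∈ V) (hv1 : ‖v‖ = 1) :
    sInf (raySet A V) ≤ ⟪v, clm A v⟫ :=
  csInf_le (raySet_bddBelow A V) ⟨v, ⟨hvV, hv1⟩, rfl⟩

lemma exists_unit {V : Submodule ℝ (EuclideanSpace ℝ (Fin n))} (hV : V ≠ ⊥) :
    ∃ v, v ∈ V ∧ ‖v‖ = 1 := by
  obtain ⟨x, hxV, hx0⟩ := Submodule.exists_mem_ne_zero_of_ne_bot hV
  refine ⟨‖x‖⁻¹ • x, V.smul_mem _ hxV, ?_⟩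
  rw [norm_smul, norm_inv, norm_norm]
  field_simp [norm_ne_zero_iff.mpr hx0]

lemma eset_bddAbove (k : ℕ) (A : Matrix (Fin n) (Fin n) ℝ) : BddAbove (eset k A) := by
  refine ⟨specNorm A, ?_⟩
  rintro s ⟨V, hVk, rfl⟩
  by_cases hV : V = ⊥
  · have : raySet A V = ∅ := by
      ext b; simp only [raySet, Set.mem_image, Set.mem_setOf_eq, Set.mem_empty_iff_false,
        iff_false]
      rintro ⟨v, ⟨hvV, hv1⟩, rfl⟩
      rw [hV, Submodule.mem_bot] at hvV
      rw [hvV] at hv1; simp at hv1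
    rw [this, Real.sInf_empty]
    exact norm_nonneg _
  · obtain ⟨v, hvV, hv1⟩ := exists_unit hV
    refine le_trans (csInf_le_ray A hvV hv1) ?_
    exact le_trans (le_abs_self _) (ray_abs_le A hv1)

lemma le_eigVal {k : ℕ} {A : Matrix (Fin n) (Fin n) ℝ} {c : ℝ}
    (V : Submodule ℝ (EuclideanSpace ℝ (Fin n))) (hVk : Module.finrank ℝ V = k)
    (hne : ∃ v, v ∈ V ∧ ‖v‖ = 1)
    (hc : ∀ v, v ∈ V → ‖v‖ = 1 → c ≤ ⟪v, clm A v⟫) : c ≤ eigVal k A := by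
  rw [eigVal_eq]
  refine le_trans ?_ (le_csSup (eset_bddAbove k A) ⟨V, hVk, rfl⟩)
  refine le_csInf ?_ ?_
  · obtain ⟨v, hvV, hv1⟩ := hne
    exact ⟨_, ⟨v, ⟨hvV, hv1⟩, rfl⟩⟩
  · rintro b ⟨v, ⟨hvV, hv1⟩, rfl⟩
    exact hc v hvV hv1

lemma weyl {k : ℕ} (hk : k ≠ 0) (A B : Matrix (Fin n) (Fin n) ℝ)
    (hex : ∃ V : Submodule ℝ (EuclideanSpace ℝ (Fin n)), Module.finrank ℝ V = k) :
    eigVal k A ≤ eigVal k B + specNorm (A - B) := by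
  obtain ⟨V₀, hV₀⟩ := hex
  rw [eigVal_eq, eigVal_eq]
  refine csSup_le ⟨_, ⟨V₀, hV₀, rfl⟩⟩ ?_
  rintro s ⟨V, hVk, rfl⟩
  have hVbot : V ≠ ⊥ := by
    intro h; rw [h] at hVk; simp [finrank_bot] at hVk; exact hk hVk.symm
  obtain ⟨v₀, hv₀V, hv₀1⟩ := exists_unit hVbot
  have key : sInf (raySet A V) ≤ sInf (raySet B V) + specNorm (A - B) := by
    rw [← sub_le_iff_le_add]
    refine le_csInf ⟨_, ⟨v₀, ⟨hv₀V, hv₀1⟩, rfl⟩⟩ ?_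
    rintro b ⟨v, ⟨hvV, hv1⟩, rfl⟩
    dsimp only
    rw [sub_le_iff_le_add]
    refine le_trans (csInf_le_ray A hvV hv1) ?_
    have hdiff : ⟪v, clm A v⟫ - ⟪v, clm B v⟫ = ⟪v, clm (A - B) v⟫ := by
      rw [clm_sub]; simp [inner_sub_right]
    have := le_trans (le_abs_self _) (ray_abs_le (A - B) hv1)
    rw [← hdiff] at this
    rw [ray_clm]
    linarith
  refine le_trans key ?_
  have : sInf (raySet B V) ≤ sSup (eset k B) := le_csSup (eset_bddAbove k B) ⟨V, hVk, rfl⟩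
  linarith

lemma clm_adjoint (A : Matrix (Fin m) (Fin k) ℝ) :
    ContinuousLinearMap.adjoint (clm A) = clm Aᵀ := by
  symm
  rw [ContinuousLinearMap.eq_adjoint_iff]
  intro x y
  rw [← inner_clm_left]

lemma exists_top_singular (M : Matrix (Fin n) (Fin r) ℝ) (hr : r ≠ 0) :
    ∃ z : EuclideanSpace ℝ (Fin r), ‖z‖ = 1 ∧ ‖clm M z‖ = specNorm M ∧
      clm (Mᵀ * M) z = (specNorm M ^ 2) • z := by
  haveI : Nontrivial (EuclideanSpace ℝ (Fin r)) := by
    apply Module.nontrivial_of_finrank_pos (R := ℝ)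
    rw [finrank_euclideanSpace]
    simpa using Nat.pos_of_ne_zero hr
  obtain ⟨z, hzmem, hmax⟩ := (isCompact_sphere (0 : EuclideanSpace ℝ (Fin r)) 1).exists_isMaxOn
    (NormedSpace.sphere_nonempty.mpr (by norm_num))
    ((clm M).continuous.norm.continuousOn)
  have hz1 : ‖z‖ = 1 := by simpa using hzmem
  have hσ : ‖clm M z‖ = specNorm M := by
    rw [specNorm_eq]
    refine le_antisymm (by simpa [hz1] using (clm M).le_opNorm z) ?_
    refine (clm M).opNorm_le_bound (norm_nonneg _) fun x => ?_
    by_cases hx : x = 0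
    · simp [hx]
    · have hxs : ‖x‖⁻¹ • x ∈ Metric.sphere (0 : EuclideanSpace ℝ (Fin r)) 1 := by
        simp [norm_smul, norm_ne_zero_iff.mpr hx, inv_mul_cancel₀ (norm_ne_zero_iff.mpr hx)]
      have := hmax hxs
      simp only [Set.mem_setOf_eq, _root_.map_smul, norm_smul, norm_inv, norm_norm] at this
      rw [inv_mul_le_iff₀ (norm_pos_iff.mpr hx)] at this
      rw [mul_comm]
      exact this
  set T := clm (Mᵀ * M) with hT
  have hTapp : ∀ x, T.reApplyInnerSelf x = ‖clm M x‖ ^ 2 := by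
    intro x
    rw [ContinuousLinearMap.reApplyInnerSelf_apply]
    have : (⟪clm M x, clm M x⟫ : ℝ) = ⟪x, T x⟫ := inner_clm_clm M M x x
    rw [real_inner_self_eq_norm_sq] at this
    rw [real_inner_comm] at this
    rw [this]
    rfl
  have hTsa : _root_.IsSelfAdjoint T := by
    rw [_root_.IsSelfAdjoint, ContinuousLinearMap.star_eq_adjoint, clm_adjoint,
      Matrix.transpose_mul, Matrix.transpose_transpose]
  have hmax' : IsMaxOn T.reApplyInnerSelf (Metric.sphere (0 : EuclideanSpace ℝ (Fin r)) ‖z‖) z := by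
    rw [hz1]
    intro x hx
    simp only [Set.mem_setOf_eq, hTapp]
    have := hmax hx
    simp only [Set.mem_setOf_eq] at this
    exact pow_le_pow_left₀ (norm_nonneg _) this 2
  have htz := hTsa.eq_smul_self_of_isLocalExtrOn (Or.inr hmax'.localize)
  refine ⟨z, hz1, hσ, ?_⟩
  have hray : T.rayleighQuotient z = specNorm M ^ 2 := by
    rw [ContinuousLinearMap.rayleighQuotient, hTapp, hz1, hσ]
    simp
  rw [hray] at htz
  simpa using htz

/-- Subspace error between two basis matrices: SE(U1,U2) = ‖(I − U1 U1')U2‖. -/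
noncomputable def SE {n r : ℕ} (U1 U2 : Matrix (Fin n) (Fin r) ℝ) : ℝ :=
  specNorm ((1 - U1 * U1ᵀ) * U2)

set_option maxHeartbeats 1000000 in
/-- Davis–Kahan sin θ theorem: for symmetric `D`, `Dhat` with top-`r`
eigenvector basis matrices `Ustar`, `U` respectively, if
`λ_r(D) − λ_{r+1}(D) − ‖D − Dhat‖ > 0` then
`SE(U, Ustar) ≤ ‖D − Dhat‖ / (λ_r(D) − λ_{r+1}(D) − ‖D − Dhat‖)`. -/
theorem davis_kahan_sin_theta {n r : ℕ}
    (D Dhat : Matrix (Fin n) (Fin n) ℝ)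
    (Ustar U : Matrix (Fin n) (Fin r) ℝ)
    (hD : D.IsHermitian) (hDhat : Dhat.IsHermitian)
    (hUstar : Ustarᵀ * Ustar = 1) (hU : Uᵀ * U = 1)
    (hUstarEig : ∃ Λ : Matrix (Fin r) (Fin r) ℝ,
      (∀ i j, i ≠ j → Λ i j = 0) ∧ D * Ustar = Ustar * Λ ∧
      ∀ i, eigVal r D ≤ Λ i i)
    (hUEig : ∃ Λ : Matrix (Fin r) (Fin r) ℝ,
      (∀ i j, i ≠ j → Λ i j = 0) ∧ Dhat * U = U * Λ ∧
      ∀ i, eigVal r Dhat ≤ Λ i i)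
    (hgap : 0 < eigVal r D - eigVal (r + 1) D - specNorm (D - Dhat)) :
    SE U Ustar ≤
      specNorm (D - Dhat) / (eigVal r D - eigVal (r + 1) D - specNorm (D - Dhat)) := by
  obtain ⟨Λs, hΛsdiag, hΛseq, hΛsge⟩ := hUstarEig
  obtain ⟨Λh, hΛhdiag, hΛheq, hΛhge⟩ := hUEig
  set e := specNorm (D - Dhat) with he
  set a := eigVal r D with ha
  set b := eigVal (r + 1) D with hb
  have he0 : (0:ℝ) ≤ e := norm_nonneg _
  set P : Matrix (Fin n) (Fin n) ℝ := U * Uᵀ with hP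
  set Q : Matrix (Fin n) (Fin n) ℝ := 1 - P with hQ
  set M : Matrix (Fin n) (Fin r) ℝ := Q * Ustar with hM
  have hSEM : SE U Ustar = specNorm M := by rw [hM, hQ, hP]; rfl
  have hPT : Pᵀ = P := by rw [hP, Matrix.transpose_mul, Matrix.transpose_transpose]
  have hQT : Qᵀ = Q := by rw [hQ, Matrix.transpose_sub, Matrix.transpose_one, hPT]
  have hPP : P * P = P := by
    rw [hP, Matrix.mul_assoc, ← Matrix.mul_assoc Uᵀ U Uᵀ, hU, Matrix.one_mul]
  have hQU : Q * U = 0 := by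
    rw [hQ, Matrix.sub_mul, Matrix.one_mul, hP, Matrix.mul_assoc, hU, Matrix.mul_one, sub_self]
  have hQQ : Q * Q = Q := by
    rw [hQ, Matrix.sub_mul, Matrix.one_mul, Matrix.mul_sub, Matrix.mul_one, hPP]
    abel
  have hMTU : Mᵀ * U = 0 := by
    rw [hM, Matrix.transpose_mul, hQT, Matrix.mul_assoc, hQU, Matrix.mul_zero]
  have hUTM : Uᵀ * M = 0 := by
    have := congrArg Matrix.transpose hMTU
    simpa [Matrix.transpose_mul, Matrix.transpose_transpose] using this
  have hMTUstar : Mᵀ * Ustar = Mᵀ * M := by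
    conv_rhs => rw [hM, ← Matrix.mul_assoc]
    rw [hM, Matrix.transpose_mul, hQT, Matrix.mul_assoc Ustarᵀ Q Q, hQQ]
  have hDhatT : Dhatᵀ = Dhat := by
    ext i j
    rw [Matrix.transpose_apply]
    conv_rhs => rw [← hDhat]
    simp [Matrix.conjTranspose_apply]
  have hsymm : ∀ x y : EuclideanSpace ℝ (Fin n), ⟪x, clm Dhat y⟫ = ⟪clm Dhat x, y⟫ := by
    intro x y
    rw [inner_clm_left, hDhatT]
  rcases Nat.eq_zero_or_pos r with hr0 | hrpos
  · subst hr0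
    have hclm0 : clm M = 0 := by
      ext x i
      have hx : x = 0 := Subsingleton.elim x 0
      rw [hx, map_zero]
      rfl
    rw [hSEM, specNorm_eq, hclm0, norm_zero]
    exact div_nonneg he0 hgap.le
  have hrne : r ≠ 0 := Nat.pos_iff_ne_zero.mp hrpos
  rcases le_or_gt (specNorm M) 0 with hσ0 | hσpos
  · rw [hSEM]
    exact le_trans hσ0 (div_nonneg he0 hgap.le)
  rcases le_or_gt (a - b - e) e with hcase | hδe
  · -- trivial bound SE ≤ 1 ≤ e / δ
    have hQcontr : ∀ w : EuclideanSpace ℝ (Fin n), ‖clm Q w‖ ≤ ‖w‖ := by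
      intro w
      have h1 : (⟪clm Q w, clm Q w⟫:ℝ) = ⟪w, clm Q w⟫ := by
        rw [inner_clm_clm, hQT, hQQ]
      have h2 : (⟪clm Q w, clm Q w⟫:ℝ) = ‖clm Q w‖ ^ 2 := real_inner_self_eq_norm_sq _
      have h3 : (⟪w, clm Q w⟫:ℝ) ≤ ‖w‖ * ‖clm Q w‖ := real_inner_le_norm _ _
      nlinarith [norm_nonneg (clm Q w), norm_nonneg w]
    have hSE1 : specNorm M ≤ 1 := by
      rw [specNorm_eq]
      refine (clm M).opNorm_le_bound zero_le_one fun x => ?_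
      rw [one_mul, hM, clm_mul]
      calc ‖(clm Q) ((clm Ustar) x)‖ ≤ ‖clm Ustar x‖ := hQcontr _
      _ = ‖x‖ := norm_clm_orth Ustar hUstar x
    rw [hSEM]
    refine le_trans hSE1 ?_
    rw [le_div_iff₀ hgap, one_mul]
    exact hcase
  -- main case
  obtain ⟨z, hz1, hzσ, hzeig⟩ := exists_top_singular M hrne
  set σ := specNorm M with hσ
  set u : EuclideanSpace ℝ (Fin n) := clm Ustar z with hu
  set u2 : EuclideanSpace ℝ (Fin n) := clm M z with hu2
  have hu1 : ‖u‖ = 1 := by rw [hu, norm_clm_orth Ustar hUstar, hz1]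
  have hu2σ : ‖u2‖ = σ := hzσ
  have hGT : (Mᵀ * M)ᵀ = Mᵀ * M := by
    rw [Matrix.transpose_mul, Matrix.transpose_transpose]
  -- F3 : ⟪u2, clm D u⟫ ≥ a σ²
  have hDu : clm D u = clm Ustar (clm Λs z) := by
    rw [hu, ← ContinuousLinearMap.comp_apply, ← clm_mul, hΛseq, clm_mul,
      ContinuousLinearMap.comp_apply]
  have hinnerDu : a * σ ^ 2 ≤ ⟪u2, clm D u⟫ := by
    rw [hDu, hu2, inner_clm_clm, hMTUstar]
    rw [inner_clm_left, hGT, hzeig, real_inner_smul_left]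
    have := inner_clm_diag Λs hΛsdiag hΛsge z
    rw [hz1] at this
    have h1 : a ≤ ⟪z, clm Λs z⟫ := by simpa using this
    calc a * σ ^ 2 = σ ^ 2 * a := mul_comm _ _
    _ ≤ σ ^ 2 * ⟪z, clm Λs z⟫ := mul_le_mul_of_nonneg_left h1 (sq_nonneg σ)
  -- F4 : ⟪u2, clm Dhat u⟫ = ⟪u2, clm Dhat u2⟫
  have husplit : u = clm (P * Ustar) z + u2 := by
    rw [hu, hu2, hM, ← ContinuousLinearMap.add_apply, ← clm_add, ← Matrix.add_mul]
    rw [show P + Q = 1 by rw [hQ]; abel, Matrix.one_mul]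
  have hcrossU : ∀ (y' : EuclideanSpace ℝ (Fin r)), (⟪u2, clm U y'⟫:ℝ) = 0 := by
    intro y'
    rw [hu2, inner_clm_clm, hMTU, clm_zero]
    simp
  have hDhatPU : ∀ w : EuclideanSpace ℝ (Fin r),
      clm Dhat (clm (P * Ustar) w) = clm U (clm (Λh * (Uᵀ * Ustar)) w) := by
    intro w
    rw [← ContinuousLinearMap.comp_apply, ← clm_mul, ← ContinuousLinearMap.comp_apply, ← clm_mul]
    congr 1
    rw [hP, Matrix.mul_assoc U Uᵀ Ustar, ← Matrix.mul_assoc Dhat U (Uᵀ * Ustar),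
      hΛheq, Matrix.mul_assoc]
  have hDhat12 : (⟪u2, clm Dhat u⟫:ℝ) = ⟪u2, clm Dhat u2⟫ := by
    conv_lhs => rw [husplit]
    rw [map_add, inner_add_right, hDhatPU, hcrossU, zero_add]
  -- F6
  have hEbnd : |(⟪u2, clm (Dhat - D) u⟫:ℝ)| ≤ e * σ := by
    calc |(⟪u2, clm (Dhat - D) u⟫:ℝ)| ≤ ‖u2‖ * ‖clm (Dhat - D) u‖ := abs_real_inner_le_norm _ _
    _ ≤ ‖u2‖ * (‖clm (Dhat - D)‖ * ‖u‖) := by gcongr; exact (clm _).le_opNorm u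
    _ = e * σ := by
        rw [hu2σ, hu1, ← specNorm_eq, specNorm_sub_comm, ← he]
        ring
  have hkey : a * σ ^ 2 - e * σ ≤ ⟪u2, clm Dhat u2⟫ := by
    have hsplit2 : (⟪u2, clm Dhat u⟫:ℝ) = ⟪u2, clm D u⟫ + ⟪u2, clm (Dhat - D) u⟫ := by
      rw [clm_sub]
      simp [inner_sub_right]
    have := neg_abs_le (⟪u2, clm (Dhat - D) u⟫:ℝ)
    rw [← hDhat12]
    linarith
  -- F7: build the (r+1)-dimensional subspace
  set a' := eigVal r Dhat with ha'
  set ρc : ℝ := ⟪u2, clm Dhat u2⟫ with hρc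
  have hσ2 : (0:ℝ) < σ ^ 2 := by positivity
  set ρ : ℝ := ρc / σ ^ 2 with hρ
  set LU : EuclideanSpace ℝ (Fin r) →ₗ[ℝ] EuclideanSpace ℝ (Fin n) :=
    ((clm U : EuclideanSpace ℝ (Fin r) →L[ℝ] EuclideanSpace ℝ (Fin n)) :
      EuclideanSpace ℝ (Fin r) →ₗ[ℝ] EuclideanSpace ℝ (Fin n)) with hLU
  have hUinj : Function.Injective LU := by
    intro x y hxy
    have h0 : clm U (x - y) = 0 := by
      rw [map_sub, sub_eq_zero]; exact hxy
    have h1 := norm_clm_orth U hU (x - y)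
    rw [h0, norm_zero] at h1
    exact sub_eq_zero.mp (norm_eq_zero.mp h1.symm)
  set R : Submodule ℝ (EuclideanSpace ℝ (Fin n)) := LinearMap.range LU with hR
  have hRrank : Module.finrank ℝ R = r := by
    rw [hR, LinearMap.finrank_range_of_inj hUinj]
    simp [finrank_euclideanSpace]
  have hu2norm2 : (⟪u2, u2⟫:ℝ) = σ ^ 2 := by
    rw [real_inner_self_eq_norm_sq, hu2σ]
  have hu2ne : u2 ≠ 0 := by
    intro h
    rw [h, norm_zero] at hu2σ
    exact hσpos.ne hu2σ
  have hu2R : u2 ∉ R := by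
    rintro ⟨y, hy⟩
    have hy' : clm U y = u2 := hy
    have h0 := hcrossU y
    rw [hy', hu2norm2] at h0
    exact hσ2.ne' h0
  set W : Submodule ℝ (EuclideanSpace ℝ (Fin n)) := R ⊔ (ℝ ∙ u2) with hW
  have hinfbot : R ⊓ (ℝ ∙ u2) = ⊥ := by
    rw [eq_bot_iff]
    intro x hx
    rw [Submodule.mem_inf] at hx
    obtain ⟨hxR, hxs⟩ := hx
    obtain ⟨c, rfl⟩ := Submodule.mem_span_singleton.mp hxs
    rcases eq_or_ne c 0 with rfl | hc
    · simp
    · exact absurd (by simpa [smul_smul, inv_mul_cancel₀ hc] using R.smul_mem c⁻¹ hxR) hu2R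
  have hWrank : Module.finrank ℝ W = r + 1 := by
    have hs := Submodule.finrank_sup_add_finrank_inf_eq R (ℝ ∙ u2)
    rw [hinfbot, finrank_bot, hRrank, finrank_span_singleton hu2ne] at hs
    simpa [hW] using hs
  have hmin : min a' ρ ≤ eigVal (r + 1) Dhat := by
    refine le_eigVal W hWrank ⟨σ⁻¹ • u2, ?_, ?_⟩ ?_
    · exact W.smul_mem _ (Submodule.mem_sup_right (Submodule.mem_span_singleton_self u2))
    · rw [norm_smul, hu2σ, Real.norm_eq_abs, abs_inv, abs_of_pos hσpos,
        inv_mul_cancel₀ hσpos.ne']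
    · intro v hvW hv1
      obtain ⟨w, hwR, s, hss, rfl⟩ := Submodule.mem_sup.mp hvW
      obtain ⟨y, hy⟩ := hwR
      have hy' : clm U y = w := hy
      obtain ⟨c, rfl⟩ := Submodule.mem_span_singleton.mp hss
      rw [← hy'] at hv1 ⊢
      have hDhatUy : clm Dhat (clm U y) = clm U (clm Λh y) := by
        rw [← ContinuousLinearMap.comp_apply, ← clm_mul, hΛheq, clm_mul,
          ContinuousLinearMap.comp_apply]
      have hc1 : (⟪clm U y, clm Dhat (clm U y)⟫:ℝ) = ⟪y, clm Λh y⟫ := by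
        rw [hDhatUy, inner_clm_clm, hU, clm_one]
        simp only [ContinuousLinearMap.coe_id', id_eq]
      have hc2 : (⟪clm U y, clm Dhat u2⟫:ℝ) = 0 := by
        rw [hsymm, hDhatUy, real_inner_comm]
        exact hcrossU _
      have hc3 : (⟪u2, clm Dhat (clm U y)⟫:ℝ) = 0 := by
        rw [hDhatUy]
        exact hcrossU _
      have hcross : (⟪clm U y, u2⟫:ℝ) = 0 := by
        rw [real_inner_comm]
        exact hcrossU _
      have hUyy : (⟪clm U y, clm U y⟫:ℝ) = ‖y‖ ^ 2 := by
        rw [inner_clm_clm, hU, clm_one]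
        simp only [ContinuousLinearMap.coe_id', id_eq]
        exact real_inner_self_eq_norm_sq y
      have hexp : (⟪clm U y + c • u2, clm Dhat (clm U y + c • u2)⟫:ℝ)
          = ⟪y, clm Λh y⟫ + c ^ 2 * ρc := by
        simp only [map_add, _root_.map_smul, inner_add_left, inner_add_right,
          real_inner_smul_left, real_inner_smul_right]
        rw [hc1, hc2, hc3, ← hρc]
        ring
      have hnrm : ‖y‖ ^ 2 + c ^ 2 * σ ^ 2 = 1 := by
        have h1 : (⟪clm U y + c • u2, clm U y + c • u2⟫:ℝ) = ‖y‖ ^ 2 + c ^ 2 * σ ^ 2 := by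
          simp only [inner_add_left, inner_add_right, real_inner_smul_left,
            real_inner_smul_right]
          rw [hUyy, hcross, hcrossU, hu2norm2]
          ring
        rw [real_inner_self_eq_norm_sq, hv1] at h1
        rw [← h1]
        norm_num
      have hΛhy := inner_clm_diag Λh hΛhdiag hΛhge y
      rw [hexp]
      have hterm2 : min a' ρ * (c ^ 2 * σ ^ 2) ≤ c ^ 2 * ρc := by
        have heq2 : ρ * (c ^ 2 * σ ^ 2) = c ^ 2 * ρc := by
          rw [hρ]; field_simp
        calc min a' ρ * (c ^ 2 * σ ^ 2) ≤ ρ * (c ^ 2 * σ ^ 2) :=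
              mul_le_mul_of_nonneg_right (min_le_right _ _) (by positivity)
        _ = c ^ 2 * ρc := heq2
      calc min a' ρ = min a' ρ * (‖y‖ ^ 2 + c ^ 2 * σ ^ 2) := by rw [hnrm, mul_one]
      _ = min a' ρ * ‖y‖ ^ 2 + min a' ρ * (c ^ 2 * σ ^ 2) := by ring
      _ ≤ a' * ‖y‖ ^ 2 + c ^ 2 * ρc :=
          add_le_add (mul_le_mul_of_nonneg_right (min_le_left _ _) (sq_nonneg _)) hterm2
      _ ≤ ⟪y, clm Λh y⟫ + c ^ 2 * ρc := by linarith [hΛhy]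
  -- Weyl inequalities
  have w1 : a ≤ a' + e := by
    have hw := weyl hrne D Dhat ⟨R, hRrank⟩
    rw [← he, ← ha, ← ha'] at hw
    exact hw
  have w2 : eigVal (r + 1) Dhat ≤ b + e := by
    have hw := weyl (Nat.succ_ne_zero r) Dhat D ⟨W, hWrank⟩
    rw [specNorm_sub_comm, ← he, ← hb] at hw
    exact hw
  rcases min_cases a' ρ with ⟨hmeq, _⟩ | ⟨hmeq, _⟩
  · exfalso
    rw [hmeq] at hmin
    linarith [w1, w2, hmin, hδe]
  · rw [hmeq] at hmin
    have hρc_le : ρc ≤ (b + e) * σ ^ 2 := by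
      rw [hρ] at hmin
      exact (div_le_iff₀ hσ2).mp (le_trans hmin w2)
    have h2 : (a - b - e) * σ ^ 2 ≤ e * σ := by linarith [hkey, hρc_le]
    have h3 : (a - b - e) * σ * σ ≤ e * σ := by
      rw [mul_assoc, ← pow_two]
      exact h2
    have hfin : (a - b - e) * σ ≤ e := le_of_mul_le_mul_right h3 hσpos
    rw [hSEM, le_div_iff₀ hgap]
    linarith [hfin]
end

section
/- For a standard Gaussian random variable ξ and any threshold γ ≥ 9 and ε ∈ (0, 0.01), the truncated fourth-moment quantity β₁⁻ := E[(ξ⁴ − ξ²)·𝟙{ξ² ≤ (1−ε)γ}] satisfies β₁⁻ ≥ 1.5. -/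
open MeasureTheory ProbabilityTheory Real Set
open scoped NNReal ENNReal

lemma pdf01 (x : ℝ) : gaussianPDFReal 0 1 x = (√(2*π))⁻¹ * rexp (-x^2/2) := by
  simp [gaussianPDFReal]

lemma gauss_conv (f : ℝ → ℝ) {s : Set ℝ} (hs : MeasurableSet s) :
    ∫ x in s, f x ∂(gaussianReal 0 1) = ∫ x in s, gaussianPDFReal 0 1 x * f x := by
  rw [gaussianReal_of_var_ne_zero _ one_ne_zero, restrict_withDensity hs]
  have : (gaussianPDF 0 1) = fun x => ((Real.toNNReal (gaussianPDFReal 0 1 x) : ℝ≥0) : ℝ≥0∞) := rfl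
  rw [this, integral_withDensity_eq_integral_smul ((measurable_gaussianPDFReal 0 1).real_toNNReal)]
  congr 1; ext x
  simp [NNReal.smul_def, Real.coe_toNNReal _ (gaussianPDFReal_nonneg 0 1 x)]

lemma int_g : Integrable (fun x : ℝ => gaussianPDFReal 0 1 x * (x^4 - x^2)) := by
  have h4 : Integrable (fun x : ℝ => x ^ 4 * rexp (-(1/2) * x ^ 2)) := by
    have := integrable_rpow_mul_exp_neg_mul_sq (b := 1/2) (s := 4) (by norm_num) (by norm_num)
    have e : ∀ y:ℝ, y ^ (4:ℝ) = y ^ (4:ℕ) := fun y => by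
      rw [show (4:ℝ) = ((4:ℕ):ℝ) by norm_num, Real.rpow_natCast]
    simpa [e] using this
  have h2 : Integrable (fun x : ℝ => x ^ 2 * rexp (-(1/2) * x ^ 2)) := by
    have := integrable_rpow_mul_exp_neg_mul_sq (b := 1/2) (s := 2) (by norm_num) (by norm_num)
    have e : ∀ y:ℝ, y ^ (2:ℝ) = y ^ (2:ℕ) := fun y => by
      rw [show (2:ℝ) = ((2:ℕ):ℝ) by norm_num, Real.rpow_natCast]
    simpa [e] using this
  refine ((h4.add h2).const_mul (√(2*π))⁻¹).mono' ?_ ?_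
  · exact ((measurable_gaussianPDFReal 0 1).mul (by fun_prop)).aestronglyMeasurable
  · refine Filter.Eventually.of_forall fun x => ?_
    simp only [Pi.add_apply]
    rw [pdf01, Real.norm_eq_abs, abs_mul]
    have he : -x^2/2 = -(1/2) * x^2 := by ring
    have hc : (0:ℝ) ≤ (√(2*π))⁻¹ := by positivity
    have habs : |x^4 - x^2| ≤ x^4 + x^2 := by
      rw [abs_le]; constructor <;> nlinarith [pow_two_nonneg x, pow_two_nonneg (x^2)]
    rw [abs_mul, abs_of_nonneg hc, abs_of_nonneg (Real.exp_nonneg _), he, mul_assoc]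
    have := Real.exp_nonneg (-(1/2) * x^2)
    nlinarith [mul_le_mul_of_nonneg_left habs (this)]

lemma int_f : Integrable (fun x : ℝ => x^4 - x^2) (gaussianReal 0 1) := by
  rw [gaussianReal_of_var_ne_zero _ one_ne_zero]
  have h : (gaussianPDF 0 1) = fun x => ((Real.toNNReal (gaussianPDFReal 0 1 x) : ℝ≥0) : ℝ≥0∞) := rfl
  rw [h, integrable_withDensity_iff_integrable_smul ((measurable_gaussianPDFReal 0 1).real_toNNReal)]
  refine int_g.congr (Filter.Eventually.of_forall fun x => ?_)
  simp [NNReal.smul_def, Real.coe_toNNReal _ (gaussianPDFReal_nonneg 0 1 x)]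


-- derivative helpers
lemma hd_exp (x : ℝ) : HasDerivAt (fun y : ℝ => rexp (-y^2/2)) (-x * rexp (-x^2/2)) x := by
  have h1 : HasDerivAt (fun y : ℝ => -y^2/2) (-x) x := by
    have : HasDerivAt (fun y : ℝ => -y^2/2) (-(↑2 * x ^ (2 - 1)) / 2) x := ((hasDerivAt_pow 2 x).neg.div_const 2)
    convert this using 1 <;> ring
  simpa [mul_comm] using h1.exp

lemma hd_F (x : ℝ) : HasDerivAt (fun y : ℝ => -(y^3 + 2*y) * rexp (-y^2/2))
    ((x^4 - x^2 - 2) * rexp (-x^2/2)) x := by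
  have h1 : HasDerivAt (fun y : ℝ => -(y^3 + 2*y)) (-(3*x^2 + 2)) x := by
    have := ((hasDerivAt_pow 3 x).add ((hasDerivAt_id x).const_mul 2)).neg
    simpa [Pi.neg_def, Pi.add_def] using this
  have : HasDerivAt (fun y : ℝ => -(y^3 + 2*y) * rexp (-y^2/2)) (-(3 * x ^ 2 + 2) * rexp (-x ^ 2 / 2) + -(x ^ 3 + 2 * x) * (-x * rexp (-x ^ 2 / 2))) x := h1.mul (hd_exp x)
  convert this using 1
  ring

lemma hd_G (x : ℝ) : HasDerivAt (fun y : ℝ => -rexp (-y^2/2)) (x * rexp (-x^2/2)) x := by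
  simpa [Pi.neg_def] using (hd_exp x).neg

-- integrability of x * exp
lemma int_xexp : Integrable (fun x : ℝ => x * rexp (-x^2/2)) := by
  have := integrable_rpow_mul_exp_neg_mul_sq (b := 1/2) (s := 1) (by norm_num) (by norm_num)
  refine this.congr (Filter.Eventually.of_forall fun x => ?_)
  simp only [Real.rpow_one]
  ring_nf

lemma tail_xexp (a : ℝ) : ∫ x in Ioi a, x * rexp (-x^2/2) = rexp (-a^2/2) := by
  have h := integral_Ioi_of_hasDerivAt_of_tendsto' (f := fun y : ℝ => -rexp (-y^2/2))
    (f' := fun x : ℝ => x * rexp (-x^2/2)) (a := a) (m := 0)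
    (fun x _ => hd_G x) int_xexp.integrableOn ?_
  · simpa using h
  · rw [show (0:ℝ) = -0 by norm_num]
    apply Filter.Tendsto.neg
    apply Real.tendsto_exp_atBot.comp
    have h2 : Filter.Tendsto (fun y:ℝ => y^2/2) Filter.atTop Filter.atTop :=
      (Filter.tendsto_pow_atTop two_ne_zero).atTop_div_const (by norm_num)
    exact (Filter.tendsto_neg_atTop_atBot.comp h2).congr fun y => by simp [Function.comp]; ring

lemma tail_exp_le {a : ℝ} (ha : 0 < a) :
    ∫ x in Ioi a, rexp (-x^2/2) ≤ rexp (-a^2/2) / a := by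
  have h1 : ∫ x in Ioi a, rexp (-x^2/2) ≤ ∫ x in Ioi a, (x/a) * rexp (-x^2/2) := by
    refine setIntegral_mono_on ((integrable_exp_neg_mul_sq (b := 1/2) (by norm_num)).congr
      (Filter.Eventually.of_forall fun x => by ring_nf)).integrableOn
      ((int_xexp.div_const a).congr (Filter.Eventually.of_forall fun x => by ring)).integrableOn
      measurableSet_Ioi (fun x hx => ?_)
    have hxa : 1 ≤ x / a := (one_le_div ha).2 (le_of_lt hx)
    nlinarith [Real.exp_pos (-x^2/2)]
  calc ∫ x in Ioi a, rexp (-x^2/2) ≤ ∫ x in Ioi a, (x/a) * rexp (-x^2/2) := h1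
    _ = (∫ x in Ioi a, x * rexp (-x^2/2)) / a := by
        rw [← integral_div]; congr 1; ext x; ring
    _ = rexp (-a^2/2) / a := by rw [tail_xexp]

lemma whole_exp : ∫ x : ℝ, rexp (-x^2/2) = √(2*π) := by
  have h := integral_gaussian (1/2)
  rw [show π / (1/2) = 2*π by ring] at h
  rw [← h]; congr 1; ext x; congr 1; ring

lemma int_exp : Integrable (fun x : ℝ => rexp (-x^2/2)) :=
  (integrable_exp_neg_mul_sq (b := 1/2) (by norm_num)).congr
    (Filter.Eventually.of_forall fun x => by ring_nf)

lemma Ioc_exp_lb {a : ℝ} (ha : 0 < a) :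
    √(2*π) - 2*(rexp (-a^2/2)/a) ≤ ∫ x in Ioc (-a) a, rexp (-x^2/2) := by
  have hsplit1 : (∫ x in Iic (-a), rexp (-x^2/2)) + ∫ x in Ioi (-a), rexp (-x^2/2) = √(2*π) := by
    rw [← whole_exp]
    exact intervalIntegral.integral_Iic_add_Ioi int_exp.integrableOn int_exp.integrableOn
  have hsplit2 : ∫ x in Ioi (-a), rexp (-x^2/2)
      = (∫ x in Ioc (-a) a, rexp (-x^2/2)) + ∫ x in Ioi a, rexp (-x^2/2) := by
    rw [← setIntegral_union (Ioc_disjoint_Ioi le_rfl) measurableSet_Ioi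
      int_exp.integrableOn int_exp.integrableOn, Ioc_union_Ioi_eq_Ioi (by linarith : -a ≤ a)]
  have hleft : ∫ x in Iic (-a), rexp (-x^2/2) = ∫ x in Ioi a, rexp (-x^2/2) := by
    have := integral_comp_neg_Iic (-a) (fun x : ℝ => rexp (-x^2/2))
    simp only [neg_neg, neg_sq] at this
    exact this
  have htail := tail_exp_le ha
  linarith

lemma Ioc_main {a : ℝ} (ha : 0 < a) : ∫ x in Ioc (-a) a, (x^4 - x^2) * rexp (-x^2/2)
    = -(2*(a^3+2*a))*rexp (-a^2/2) + 2 * ∫ x in Ioc (-a) a, rexp (-x^2/2) := by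
  have h1 : ∫ x in (-a)..a, (x^4 - x^2 - 2) * rexp (-x^2/2)
      = (-(a^3+2*a)*rexp (-a^2/2)) - (-((-a)^3+2*(-a))*rexp (-(-a)^2/2)) :=
    intervalIntegral.integral_eq_sub_of_hasDerivAt (fun x _ => hd_F x)
      (Continuous.intervalIntegrable (by continuity) _ _)
  rw [intervalIntegral.integral_of_le (by linarith : -a ≤ a)] at h1
  have h2 : ∫ x in Ioc (-a) a, (x^4 - x^2) * rexp (-x^2/2)
      = (∫ x in Ioc (-a) a, (x^4 - x^2 - 2) * rexp (-x^2/2))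
        + ∫ x in Ioc (-a) a, 2 * rexp (-x^2/2) := by
    rw [← integral_add ((Continuous.integrableOn_Ioc (by continuity)))
      ((Continuous.integrableOn_Ioc (by continuity)))]
    congr 1; ext x; ring
  rw [h2, h1, integral_const_mul]
  rw [show ((-a:ℝ))^3 = -a^3 by ring, show ((-a:ℝ))^2 = a^2 by ring]
  ring

/-- For a standard Gaussian ξ, any threshold γ ≥ 9 and ε ∈ (0, 0.01):
`E[(ξ⁴ − ξ²)·𝟙{ξ² ≤ (1−ε)γ}] ≥ 1.5`. -/
theorem truncated_fourth_moment_lb (γ ε : ℝ) (hγ : 9 ≤ γ)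
    (hε0 : 0 < ε) (hε : ε < 0.01) :
    1.5 ≤ ∫ x in {x : ℝ | x ^ 2 ≤ (1 - ε) * γ}, (x ^ 4 - x ^ 2) ∂(gaussianReal 0 1) := by
  have hc : (8.41:ℝ) ≤ (1-ε)*γ := by
    nlinarith [mul_le_mul_of_nonneg_right (show (0.99:ℝ) ≤ 1-ε by linarith)
      (show (0:ℝ) ≤ γ by linarith)]
  set S : Set ℝ := {x : ℝ | x ^ 2 ≤ (1 - ε) * γ} with hSdef
  have hS : MeasurableSet S := measurableSet_le (measurable_id.pow_const 2) measurable_const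
  have hTS : Icc (-2.9:ℝ) 2.9 ⊆ S := by
    intro x hx
    obtain ⟨h1, h2⟩ := hx
    simp only [hSdef, mem_setOf_eq]
    nlinarith
  have hsplit : ∫ x in S, (x^4 - x^2) ∂(gaussianReal 0 1)
      = (∫ x in Icc (-2.9:ℝ) 2.9, (x^4 - x^2) ∂(gaussianReal 0 1))
        + ∫ x in S \ Icc (-2.9:ℝ) 2.9, (x^4 - x^2) ∂(gaussianReal 0 1) := by
    have h := setIntegral_union (s := Icc (-2.9:ℝ) 2.9) (t := S \ Icc (-2.9:ℝ) 2.9)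
      Set.disjoint_sdiff_right (hS.diff measurableSet_Icc)
      int_f.integrableOn int_f.integrableOn
    rwa [Set.union_diff_cancel hTS] at h
  have hpos : 0 ≤ ∫ x in S \ Icc (-2.9:ℝ) 2.9, (x^4 - x^2) ∂(gaussianReal 0 1) := by
    apply setIntegral_nonneg (hS.diff measurableSet_Icc)
    intro x hx
    have hx2 : ¬(-2.9 ≤ x ∧ x ≤ 2.9) := by simpa [Set.mem_Icc] using hx.2
    have h29 : (2.9:ℝ)^2 ≤ x^2 := by
      rcases lt_or_ge x (-2.9) with h | h
      · nlinarith
      · have : (2.9:ℝ) < x := by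
          by_contra hcon
          exact hx2 ⟨h, le_of_not_gt hcon⟩
        nlinarith
    nlinarith
  have hIcc : ∫ x in Icc (-2.9:ℝ) 2.9, (x^4 - x^2) ∂(gaussianReal 0 1)
      = (√(2*π))⁻¹ * ∫ x in Ioc (-2.9:ℝ) 2.9, (x^4 - x^2) * rexp (-x^2/2) := by
    rw [gauss_conv _ measurableSet_Icc, integral_Icc_eq_integral_Ioc, ← integral_const_mul]
    refine setIntegral_congr_fun measurableSet_Ioc fun x _ => ?_
    rw [pdf01]
    ring
  -- numeric facts
  have hE0 : 0 ≤ rexp (-(2.9:ℝ)^2/2) := (Real.exp_pos _).le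
  have hExp : rexp (-(2.9:ℝ)^2/2) ≤ 0.0185 := by
    have h1 : rexp (-(2.9:ℝ)^2/2) ≤ rexp (-4) := by
      apply Real.exp_le_exp.2
      norm_num
    have h4 : (54.3:ℝ) ≤ rexp 4 := by
      have he := Real.exp_one_gt_d9
      have : rexp 4 = rexp 1 ^ 4 := by
        rw [show (4:ℝ) = ((4:ℕ):ℝ) * 1 by norm_num, Real.exp_nat_mul]
      rw [this]
      have hp : (2.7182818283:ℝ)^4 ≤ rexp 1^4 := pow_le_pow_left₀ (by norm_num) he.le 4
      nlinarith
    have h2 : rexp (-4:ℝ) = (rexp 4)⁻¹ := Real.exp_neg 4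
    rw [h2] at h1
    have h3 : (rexp 4)⁻¹ ≤ (54.3:ℝ)⁻¹ := by
      apply inv_anti₀ (by norm_num) h4
    calc rexp (-(2.9:ℝ)^2/2) ≤ (rexp 4)⁻¹ := h1
      _ ≤ (54.3:ℝ)⁻¹ := h3
      _ ≤ 0.0185 := by norm_num
  have hsq : (2.5:ℝ) ≤ √(2*π) := by
    rw [show (2.5:ℝ) = √(6.25) by
      rw [show (6.25:ℝ) = 2.5^2 by norm_num]; exact (Real.sqrt_sq (by norm_num)).symm]
    apply Real.sqrt_le_sqrt
    nlinarith [Real.pi_gt_d6]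
  have hsqpos : (0:ℝ) < √(2*π) := by linarith
  -- lower bound for the Ioc integral
  have hIoc_e := Ioc_exp_lb (show (0:ℝ) < 2.9 by norm_num)
  have hmain := Ioc_main (show (0:ℝ) < 2.9 by norm_num)
  have hX : 1.5 * √(2*π) ≤ ∫ x in Ioc (-2.9:ℝ) 2.9, (x^4 - x^2) * rexp (-x^2/2) := by
    rw [hmain]
    have hKE : (2*((2.9:ℝ)^3+2*2.9)) * rexp (-(2.9:ℝ)^2/2)
        + 2 * (2*(rexp (-(2.9:ℝ)^2/2)/2.9)) ≤ 0.5 * √(2*π) := by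
      have h1 : 2 * ((2.9:ℝ) ^ 3 + 2 * 2.9) * rexp (-(2.9:ℝ)^2/2)
          + 2 * (2 * (rexp (-(2.9:ℝ)^2/2) / 2.9)) = (1790962/29000) * rexp (-(2.9:ℝ)^2/2) := by
        ring
      rw [h1]
      nlinarith
    nlinarith
  have hfinal : (1.5:ℝ) ≤ (√(2*π))⁻¹ * ∫ x in Ioc (-2.9:ℝ) 2.9, (x^4 - x^2) * rexp (-x^2/2) := by
    have := mul_le_mul_of_nonneg_left hX (inv_nonneg.2 hsqpos.le)
    rwa [← mul_assoc, mul_comm (√(2*π))⁻¹ 1.5, mul_assoc, inv_mul_cancel₀ hsqpos.ne', mul_one]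
      at this
  calc (1.5:ℝ) ≤ (√(2*π))⁻¹ * ∫ x in Ioc (-2.9:ℝ) 2.9, (x^4 - x^2) * rexp (-x^2/2) := hfinal
    _ = ∫ x in Icc (-2.9:ℝ) 2.9, (x^4 - x^2) ∂(gaussianReal 0 1) := hIcc.symm
    _ ≤ ∫ x in S, (x^4 - x^2) ∂(gaussianReal 0 1) := by rw [hsplit]; linarith
    _ = ∫ x in S, (x^4 - x^2) ∂(gaussianReal 0 1) := rfl
end

section
/- Let Z be a Gaussian random variable with mean 0 and variance ‖x*‖² > 0, and let d > 0. Then E[Z² exp(−Z²/(4d²))] ≤ 2√2 · d³ / ‖x*‖. -/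
open MeasureTheory ProbabilityTheory

open Real in
lemma integral_sq_mul_exp_neg_mul_sq_aux {b : ℝ} (hb : 0 < b) :
    ∫ x : ℝ, x ^ 2 * Real.exp (-b * x ^ 2)
      = Real.sqrt π / (2 * (b * Real.sqrt b)) := by
  have h1 : ∫ x : ℝ, x ^ 2 * Real.exp (-b * x ^ 2)
      = 2 * ∫ x in Set.Ioi (0:ℝ), x ^ 2 * Real.exp (-b * x ^ 2) := by
    rw [← integral_comp_abs (f := fun t => t ^ 2 * Real.exp (-b * t ^ 2))]
    simp [sq_abs]
  have h2 : ∫ x in Set.Ioi (0:ℝ), x ^ 2 * Real.exp (-b * x ^ 2)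
      = ∫ x in Set.Ioi (0:ℝ), x ^ (2:ℝ) * Real.exp (-b * x ^ (2:ℝ)) := by
    refine setIntegral_congr_fun measurableSet_Ioi fun x hx => ?_
    rw [show ((2:ℝ)) = ((2:ℕ):ℝ) by norm_num, Real.rpow_natCast]
  have h3 := integral_rpow_mul_exp_neg_mul_rpow (p := 2) (q := 2)
    (by norm_num) (by norm_num) hb
  have hG : Real.Gamma ((2 + 1) / 2) = (1/2) * Real.sqrt π := by
    rw [show ((2:ℝ) + 1) / 2 = 1/2 + 1 by norm_num, Real.Gamma_add_one (by norm_num),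
      Real.Gamma_one_half_eq]
  have hpow : b ^ (-((2:ℝ) + 1) / 2) = (b * Real.sqrt b)⁻¹ := by
    rw [show (-((2:ℝ) + 1) / 2) = -(1 + 1/2) by norm_num, Real.rpow_neg hb.le,
      Real.rpow_add hb, Real.rpow_one, ← Real.sqrt_eq_rpow]
  rw [h1, h2, h3, hG, hpow]
  field_simp

/-- For `Z ~ N(0, σ²)` with `σ > 0` and `d > 0`:
`E[Z² exp(−Z²/(4d²))] ≤ 2√2 d³/σ`. -/
theorem gaussian_damped_second_moment (σ d : ℝ) (hσ : 0 < σ) (hd : 0 < d) :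
    (∫ z, z ^ 2 * Real.exp (-z ^ 2 / (4 * d ^ 2))
        ∂(gaussianReal 0 (Real.toNNReal (σ ^ 2)))) ≤
      2 * Real.sqrt 2 * d ^ 3 / σ := by
  set v : NNReal := Real.toNNReal (σ ^ 2) with hv_def
  have hv : v ≠ 0 := by
    simp [hv_def, Real.toNNReal_eq_zero, not_le]
    positivity
  have hvr : (v : ℝ) = σ ^ 2 := Real.coe_toNNReal _ (by positivity)
  set b : ℝ := 1 / (2 * σ ^ 2) + 1 / (4 * d ^ 2) with hb_def
  have hb : 0 < b := by positivity
  -- rewrite the integral as a Lebesgue integral against the pdf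
  have key : (∫ z, z ^ 2 * Real.exp (-z ^ 2 / (4 * d ^ 2))
        ∂(gaussianReal 0 v))
      = (Real.sqrt (2 * Real.pi * σ ^ 2))⁻¹ * (Real.sqrt Real.pi / (2 * (b * Real.sqrt b))) := by
    rw [gaussianReal_of_var_ne_zero 0 hv]
    have : (volume : Measure ℝ).withDensity (gaussianPDF 0 v)
        = (volume : Measure ℝ).withDensity
            (fun x => ((Real.toNNReal (gaussianPDFReal 0 v x) : NNReal) : ENNReal)) := rfl
    rw [this, integral_withDensity_eq_integral_smul
      (measurable_gaussianPDFReal 0 v).real_toNNReal]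
    have heq : ∀ x : ℝ, (Real.toNNReal (gaussianPDFReal 0 v x) : NNReal)
          • (x ^ 2 * Real.exp (-x ^ 2 / (4 * d ^ 2)))
        = (Real.sqrt (2 * Real.pi * σ ^ 2))⁻¹ * (x ^ 2 * Real.exp (-b * x ^ 2)) := by
      intro x
      rw [NNReal.smul_def, Real.coe_toNNReal _ (gaussianPDFReal_nonneg 0 v x)]
      unfold gaussianPDFReal
      rw [hvr]
      rw [show -b * x ^ 2 = (- (x - 0)^2 / (2 * σ ^ 2)) + (-x ^ 2 / (4 * d ^ 2)) by
        rw [hb_def]; field_simp; ring, Real.exp_add]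
      simp only [smul_eq_mul]
      ring
    simp_rw [heq]
    rw [integral_const_mul, integral_sq_mul_exp_neg_mul_sq_aux hb]
  rw [key]
  -- now the bound
  have hsqrt4d : Real.sqrt (4 * d ^ 2) = 2 * d := by
    rw [show (4 * d ^ 2 : ℝ) = (2 * d) ^ 2 by ring, Real.sqrt_sq (by positivity)]
  have hbsb : 1 / (8 * d ^ 3) ≤ b * Real.sqrt b := by
    have hc : (1 : ℝ) / (4 * d ^ 2) ≤ b := by
      rw [hb_def]
      have hpos : (0:ℝ) ≤ 1 / (2 * σ ^ 2) := by positivity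
      linarith
    have hcpos : (0:ℝ) < 1 / (4 * d ^ 2) := by positivity
    have hs : Real.sqrt (1 / (4 * d ^ 2)) ≤ Real.sqrt b := Real.sqrt_le_sqrt hc
    have hs1 : Real.sqrt (1 / (4 * d ^ 2)) = 1 / (2 * d) := by
      rw [one_div, Real.sqrt_inv, hsqrt4d, one_div]
    calc 1 / (8 * d ^ 3) = (1 / (4 * d ^ 2)) * (1 / (2 * d)) := by
          field_simp; ring
      _ ≤ b * Real.sqrt b := by
          apply mul_le_mul hc (by rw [← hs1]; exact hs) (by positivity)
            hb.le
  have h1 : Real.sqrt Real.pi / (2 * (b * Real.sqrt b))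
      ≤ Real.sqrt Real.pi * (4 * d ^ 3) := by
    rw [div_le_iff₀ (by positivity)]
    have h2b : 1 / (4 * d ^ 3) ≤ 2 * (b * Real.sqrt b) := by
      calc (1:ℝ) / (4 * d ^ 3) = 2 * (1 / (8 * d ^ 3)) := by ring
        _ ≤ 2 * (b * Real.sqrt b) := by linarith
    calc Real.sqrt Real.pi = (Real.sqrt Real.pi * (4 * d ^ 3)) * (1 / (4 * d ^ 3)) := by
          field_simp
      _ ≤ (Real.sqrt Real.pi * (4 * d ^ 3)) * (2 * (b * Real.sqrt b)) := by
          apply mul_le_mul_of_nonneg_left h2b (by positivity)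
  have h2 : (Real.sqrt (2 * Real.pi * σ ^ 2))⁻¹ * (Real.sqrt Real.pi * (4 * d ^ 3))
      = 2 * Real.sqrt 2 * d ^ 3 / σ := by
    rw [show (2 * Real.pi * σ ^ 2 : ℝ) = 2 * Real.pi * σ ^ 2 by ring,
      Real.sqrt_mul (by positivity), Real.sqrt_sq hσ.le,
      Real.sqrt_mul (by norm_num : (0:ℝ) ≤ 2)]
    have hpi : 0 < Real.sqrt Real.pi := Real.sqrt_pos.mpr Real.pi_pos
    have h2s : Real.sqrt 2 * Real.sqrt 2 = 2 := Real.mul_self_sqrt (by norm_num)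
    field_simp
    linear_combination (-2) * h2s
  calc (Real.sqrt (2 * Real.pi * σ ^ 2))⁻¹ * (Real.sqrt Real.pi / (2 * (b * Real.sqrt b)))
      ≤ (Real.sqrt (2 * Real.pi * σ ^ 2))⁻¹ * (Real.sqrt Real.pi * (4 * d ^ 3)) := by
        apply mul_le_mul_of_nonneg_left h1 (by positivity)
    _ = 2 * Real.sqrt 2 * d ^ 3 / σ := h2
end
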